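/- arXiv:0905.4209 — 2 statements merged into one kernel-verified Lean document; each statement's English description precedes it below -/
import Mathlib

section
/- For every n ≥ 2, the first cohomology group H^1(Σ_n, ℤ_sgn) of the symmetric group Σ_n with coefficients in the sign lattice is cyclic of order 2. -/
open scoped TensorProduct

/-- The sign representation of the symmetric group `Σ_n` on `ℤ`:
`σ` acts by multiplication by `sgn σ`. -/
noncomputable def signRep (n : ℕ) : Representation ℤ (Equiv.Perm (Fin n)) ℤ where
  toFun g := ((Equiv.Perm.sign g : ℤˣ) : ℤ) • LinearMap.id
  map_one' := by
    simp [Module.End.one_eq_id]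
  map_mul' g h := by
    ext
    simp [mul_smul, map_mul, mul_comm]

/-! On the kernel of a character `χ : G →* ℤˣ` the action on `ℤ_χ` is trivial, so a 1-cocycle
restricts there to a homomorphism to `ℤ` and vanishes when `G` is finite. Hence a cocycle is
determined by its value `a` at any `t` with `χ t = -1` (it equals `a` on all of `χ⁻¹(-1)`), and
every `a ∈ ℤ` occurs, while the coboundary of `y` takes the value `-2y` at `t`. So `Z¹ ≅ ℤ`,
`B¹ ≅ 2ℤ` and `H¹ ≅ ℤ/2`; for `Σ_n` take `χ = sgn` and `t` a transposition. -/

open groupCohomology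

universe u

namespace groupCohomology

variable {k G : Type u} [CommRing k] [Group G] {A : Rep k G} {M : Type*} [AddCommGroup M]
  [Module k M]

noncomputable def H1EquivOfSurjective (φ : cocycles₁ A →ₗ[k] M) (hφ : Function.Surjective φ)
    (hker : ∀ x, φ x = 0 ↔ ⇑x ∈ coboundaries₁ A) : H1 A ≃ₗ[k] M :=
  have hπ : Function.Surjective (H1π A) := (ModuleCat.epi_iff_surjective _).1 inferInstance
  have hker' : LinearMap.ker (H1π A).hom = LinearMap.ker φ := by
    ext x; rw [LinearMap.mem_ker, LinearMap.mem_ker, hker]; exact H1π_eq_zero_iff x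
  ((H1π A).hom.quotKerEquivOfSurjective hπ).symm ≪≫ₗ Submodule.quotEquivOfEq _ _ hker' ≪≫ₗ
    φ.quotKerEquivOfSurjective hφ

end groupCohomology

abbrev intCharRep {G : Type} [Group G] (χ : G →* ℤˣ) : Rep ℤ G :=
  Rep.of ((Representation.ofDistribMulAction ℤ ℤˣ ℤ).comp χ)

namespace intCharRep

variable {G : Type} [Group G] {χ : G →* ℤˣ}

lemma cocycles₁_map_mul (f : cocycles₁ (intCharRep χ)) (g h : G) :
    f (g * h) = χ g * f h + f g :=
  (mem_cocycles₁_iff f).1 f.2 g h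

lemma cocycles₁_map_pow (f : cocycles₁ (intCharRep χ)) {g : G} (hg : χ g = 1) (m : ℕ) :
    f (g ^ m) = m * f g := by
  induction m with
  | zero => simp
  | succ m ih => rw [pow_succ', cocycles₁_map_mul, hg, ih]; push_cast; ring

lemma cocycles₁_apply_eq_zero_of_isOfFinOrder (f : cocycles₁ (intCharRep χ)) {g : G}
    (hg : χ g = 1) (hfin : IsOfFinOrder g) : f g = 0 := by
  have h := cocycles₁_map_pow f hg (orderOf g)
  rw [pow_orderOf_eq_one, cocycles₁_map_one] at h
  exact (mul_eq_zero.1 h.symm).resolve_left (Nat.cast_ne_zero.2 hfin.orderOf_pos.ne')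

variable (χ) in
lemma ite_mem_cocycles₁ (a : ℤ) :
    (fun g => if χ g = 1 then 0 else a) ∈ cocycles₁ (intCharRep χ) := by
  rw [mem_cocycles₁_iff]
  intro g h
  rcases Int.units_eq_one_or (χ g) with hg | hg <;>
    rcases Int.units_eq_one_or (χ h) with hh | hh <;>
      simp [map_mul, hg, hh]

variable [Finite G] {t : G}

lemma cocycles₁_apply_eq_ite (ht : χ t = -1) (f : cocycles₁ (intCharRep χ)) (g : G) :
    f g = if χ g = 1 then 0 else f t := by
  split_ifs with hg
  · exact cocycles₁_apply_eq_zero_of_isOfFinOrder f hg (isOfFinOrder_of_finite g)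
  · have h1 : χ (t⁻¹ * g) = 1 := by
      rw [map_mul, map_inv, ht, (Int.units_eq_one_or _).resolve_left hg]; decide
    rw [← mul_inv_cancel_left t g, cocycles₁_map_mul,
      cocycles₁_apply_eq_zero_of_isOfFinOrder f h1 (isOfFinOrder_of_finite _), mul_zero, zero_add]

noncomputable def cocycles₁EquivInt (ht : χ t = -1) : cocycles₁ (intCharRep χ) ≃ₗ[ℤ] ℤ where
  toFun f := f t
  map_add' _ _ := rfl
  map_smul' _ _ := rfl
  invFun a := ⟨_, ite_mem_cocycles₁ χ a⟩
  left_inv f := by ext g; exact (cocycles₁_apply_eq_ite ht f g).symm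
  right_inv a := by
    show (if χ t = 1 then 0 else a) = a
    rw [ht]; rfl

lemma mem_coboundaries₁_iff (ht : χ t = -1) (f : cocycles₁ (intCharRep χ)) :
    ⇑f ∈ coboundaries₁ (intCharRep χ) ↔ 2 ∣ f t := by
  constructor
  · rintro ⟨y, hy⟩
    have h : f t = χ t * y - y := congrFun hy.symm t
    exact ⟨-y, by rw [h, ht]; push_cast; ring⟩
  · rintro ⟨y, hy⟩
    refine ⟨-y, funext fun g => ?_⟩
    show χ g * -y - -y = f g
    rw [cocycles₁_apply_eq_ite ht f g, hy]
    rcases Int.units_eq_one_or (χ g) with hg | hg <;> simp [hg]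
    ring

noncomputable def H1EquivZModTwo (ht : χ t = -1) : H1 (intCharRep χ) ≃ₗ[ℤ] ZMod 2 :=
  H1EquivOfSurjective
    ((Int.castAddHom (ZMod 2)).toIntLinearMap ∘ₗ (cocycles₁EquivInt ht).toLinearMap)
    (ZMod.intCast_surjective.comp (cocycles₁EquivInt ht).surjective)
    fun f => (ZMod.intCast_zmod_eq_zero_iff_dvd _ 2).trans (mem_coboundaries₁_iff ht f).symm

end intCharRep

/-- For `n ≥ 2`, `H^1(Σ_n, ℤ_sgn)` is cyclic of order `2`. -/
theorem H1_signRep_addEquiv_zmod_two (n : ℕ) (hn : 2 ≤ n) :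
    Nonempty ((groupCohomology (Rep.of (signRep n)) 1) ≃+ ZMod 2) := by
  have hsign : Equiv.Perm.sign (Equiv.swap (⟨0, by omega⟩ : Fin n) ⟨1, by omega⟩) = -1 :=
    Equiv.Perm.sign_swap (by simp)
  -- `Rep.of (signRep n)` unfolds to `intCharRep Equiv.Perm.sign`.
  exact ⟨(intCharRep.H1EquivZModTwo hsign).toAddEquiv⟩
end

section
/- For n ≥ 2, the second cohomology group H^2(Σ_n, ℤ_sgn) of the symmetric group Σ_n with coefficients in the sign lattice is trivial except when n ∈ {3,4}; in the exceptional cases n = 3 and n = 4 it is cyclic of order 3. -/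
open scoped TensorProduct

/-!
Averaging an integral 2-cocycle `f` over the group gives a rational cochain `ψ` with `δψ = f`,
and `ψ` reduced mod `ℤ` is a twisted 1-cocycle with values in `ℚ/ℤ`. It is a homomorphism on the
alternating group, hence determined by its value on one 3-cycle `c` (all 3-cycles are
conjugate); that value is 3-torsion since `c³ = 1`, and `3 ψ c = f(1,1) + f(c,c) + f(c²,c)`.
If `ψ` is integral on even permutations, correcting it by a rational coboundary gives an
integral cochain with coboundary `f`. For `n ≥ 5`, `c` is conjugate to `c⁻¹` by an even
permutation, so `ψ c` is also 2-torsion mod `ℤ` and every `f` is a coboundary; for `n ≤ 2`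
there are no 3-cycles. For `n = 3, 4` the class of `f` is therefore detected by
`f(1,1) + f(c,c) + f(c²,c) mod 3`, and the nonzero residues are realised by Bocksteins of
twisted `ℤ/3`-valued 1-cocycles.
-/

section Twisted

variable {G M : Type*} [Group G] [AddCommGroup M] (ε : G →* ℤˣ)

def twistedD₀₁ (p : M) : G → M := fun g => ε g • p - p

def twistedD₁₂ : (G → M) →+ (G × G → M) where
  toFun χ gh := ε gh.1 • χ gh.2 - χ (gh.1 * gh.2) + χ gh.1
  map_zero' := by ext; simp
  map_add' χ χ' := by ext; simp only [Pi.add_apply, smul_add]; abel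

def IsTwistedCocycle₁ (χ : G → M) : Prop := ∀ g h, χ (g * h) = ε g • χ h + χ g

def IsTwistedCocycle₂ (f : G × G → M) : Prop :=
  ∀ g h j, f (g * h, j) + f (g, h) = ε g • f (h, j) + f (g, h * j)

def cubeSum (c : G) : (G × G → M) →+ M where
  toFun f := f (1, 1) + f (c, c) + f (c * c, c)
  map_zero' := by simp
  map_add' f f' := by simp only [Pi.add_apply]; abel

variable {ε}

lemma twistedD₁₂_apply (χ : G → M) (g h : G) :
    twistedD₁₂ ε χ (g, h) = ε g • χ h - χ (g * h) + χ g := rfl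

lemma twistedD₁₂_twistedD₀₁ (p : M) : twistedD₁₂ ε (twistedD₀₁ ε p) = 0 := by
  ext ⟨g, h⟩
  simp only [twistedD₁₂_apply, twistedD₀₁, map_mul, mul_smul, smul_sub, Pi.zero_apply]
  abel

lemma isTwistedCocycle₂_twistedD₁₂ (χ : G → M) :
    IsTwistedCocycle₂ ε (twistedD₁₂ ε χ) := by
  intro g h j
  simp only [twistedD₁₂_apply, map_mul, mul_smul, smul_add, smul_sub, mul_assoc]
  abel

lemma comp_twistedD₁₂ {N : Type*} [AddCommGroup N] (φ : M →+ N) (χ : G → M) :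
    φ ∘ twistedD₁₂ ε χ = twistedD₁₂ ε (φ ∘ χ) := by
  ext ⟨g, h⟩
  simp [twistedD₁₂_apply, Units.smul_def, map_zsmul]

lemma isTwistedCocycle₁_iff_twistedD₁₂_eq_zero {χ : G → M} :
    IsTwistedCocycle₁ ε χ ↔ twistedD₁₂ ε χ = 0 := by
  refine ⟨fun hχ => ?_, fun h g g' => ?_⟩
  · ext ⟨g, g'⟩
    rw [twistedD₁₂_apply, hχ, Pi.zero_apply]
    abel
  · have h := congrFun h (g, g')
    rw [twistedD₁₂_apply, Pi.zero_apply, sub_add_eq_add_sub, sub_eq_zero] at h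
    exact h.symm

lemma cubeSum_twistedD₁₂ {c : G} (hc : c ^ 3 = 1) (hεc : ε c = 1) (χ : G → M) :
    cubeSum c (twistedD₁₂ ε χ) = 3 • χ c := by
  have hc' : c * c * c = 1 := by rw [← hc, pow_three, mul_assoc]
  simp only [cubeSum, AddMonoidHom.coe_mk, ZeroHom.coe_mk, twistedD₁₂_apply, map_mul, hεc,
    map_one, one_mul, one_smul, hc']
  abel

namespace IsTwistedCocycle₁

variable {χ : G → M} (hχ : IsTwistedCocycle₁ ε χ)
include hχ

lemma map_one : χ 1 = 0 := by
  simpa using hχ 1 1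

lemma map_mul_of_eq_one {a : G} (ha : ε a = 1) (b : G) : χ (a * b) = χ b + χ a := by
  rw [hχ, ha, one_smul]

lemma map_inv (g : G) : χ g⁻¹ = -(ε g • χ g) := by
  have h : ε g • χ g⁻¹ + χ g = 0 := by rw [← hχ, mul_inv_cancel, hχ.map_one]
  calc χ g⁻¹ = ε g • ε g • χ g⁻¹ := by rw [smul_smul, Int.units_mul_self, one_smul]
    _ = -(ε g • χ g) := by rw [eq_neg_of_add_eq_zero_left h, smul_neg]

lemma map_pow {x : G} (hx : ε x = 1) (k : ℕ) : χ (x ^ k) = k • χ x := by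
  induction k with
  | zero => simp [hχ.map_one]
  | succ k ih => rw [pow_succ', hχ.map_mul_of_eq_one hx, ih, succ_nsmul]

lemma map_conj {x : G} (hx : ε x = 1) (g : G) : χ (g * x * g⁻¹) = ε g • χ x := by
  rw [mul_assoc, hχ, hχ.map_mul_of_eq_one hx, hχ.map_inv, smul_add, smul_neg, smul_smul,
    Int.units_mul_self, one_smul]
  abel

lemma eq_of_eq_neg_one (h : ∀ a, ε a = 1 → χ a = 0) {g τ : G} (hg : ε g = -1)
    (hτ : ε τ = -1) : χ g = χ τ := by
  have hgτ : ε (g * τ⁻¹) = 1 := by simp [hg, hτ]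
  simpa [h _ hgτ] using hχ.map_mul_of_eq_one hgτ τ

end IsTwistedCocycle₁

lemma exists_isTwistedCocycle₂_cubeSum_eq {κ : G → ZMod 3} (hκ : IsTwistedCocycle₁ ε κ)
    {c : G} (hc : c ^ 3 = 1) (hεc : ε c = 1) :
    ∃ f : G × G → ℤ, IsTwistedCocycle₂ ε f ∧ ((cubeSum c f : ℤ) : ZMod 3) = κ c := by
  set k : G → ℤ := fun g => (κ g).val
  have hk : Int.castAddHom (ZMod 3) ∘ k = κ := funext fun g => by simp [k]
  have hdvd : ∀ p, (3 : ℤ) ∣ twistedD₁₂ ε k p := fun p => by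
    have hmod := congrFun (comp_twistedD₁₂ (ε := ε) (Int.castAddHom (ZMod 3)) k) p
    rw [hk, isTwistedCocycle₁_iff_twistedD₁₂_eq_zero.mp hκ] at hmod
    exact (ZMod.intCast_zmod_eq_zero_iff_dvd _ 3).mp hmod
  choose f hf using hdvd
  refine ⟨f, fun g h j => ?_, ?_⟩
  · have hk₂ := isTwistedCocycle₂_twistedD₁₂ (ε := ε) k g h j
    simp only [hf, Units.smul_def, smul_eq_mul] at hk₂ ⊢
    apply mul_left_cancel₀ (three_ne_zero (α := ℤ))
    linear_combination hk₂
  · have h3 := cubeSum_twistedD₁₂ hc hεc k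
    rw [show twistedD₁₂ ε k = (3 : ℤ) • f from funext hf, map_zsmul, smul_eq_mul,
      nsmul_eq_mul, Nat.cast_ofNat] at h3
    rw [mul_left_cancel₀ three_ne_zero h3, ← hk, Function.comp_apply, Int.coe_castAddHom]

end Twisted

section Averaging

variable {G : Type*} [Group G] [Fintype G] {ε : G →* ℤˣ} {f : G × G → ℤ}

def averageCochain (f : G × G → ℤ) (g : G) : ℚ := (∑ j, f (g, j) : ℤ) / Fintype.card G

lemma card_mul_eq_twistedD₁₂_sum (hf : IsTwistedCocycle₂ ε f) (g h : G) :
    Fintype.card G * f (g, h) = twistedD₁₂ ε (fun g => ∑ j, f (g, j)) (g, h) := by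
  have hsum := Finset.sum_congr rfl fun j (_ : j ∈ Finset.univ) => hf g h j
  rw [Finset.sum_add_distrib, Finset.sum_add_distrib, ← Finset.smul_sum,
    Fintype.sum_equiv (Equiv.mulLeft h) (fun j => f (g, h * j)) (fun j => f (g, j)) fun _ => rfl,
    Finset.sum_const, Finset.card_univ, nsmul_eq_mul] at hsum
  rw [twistedD₁₂_apply]
  linarith

lemma twistedD₁₂_averageCochain (hf : IsTwistedCocycle₂ ε f) :
    twistedD₁₂ ε (averageCochain f) = fun p => (f p : ℚ) := by
  ext ⟨g, h⟩
  have hN : (Fintype.card G : ℚ) ≠ 0 := Nat.cast_ne_zero.mpr Fintype.card_ne_zero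
  have key := congrArg (Int.cast : ℤ → ℚ) (card_mul_eq_twistedD₁₂_sum hf g h)
  simp only [twistedD₁₂_apply, Units.smul_def, zsmul_eq_mul, averageCochain, Int.cast_mul,
    Int.cast_natCast, Int.cast_add, Int.cast_sub, Int.cast_id] at key ⊢
  field_simp
  linarith

lemma isTwistedCocycle₁_averageCochain (hf : IsTwistedCocycle₂ ε f) :
    IsTwistedCocycle₁ ε (fun g => (averageCochain f g : AddCircle (1 : ℚ))) := by
  rw [isTwistedCocycle₁_iff_twistedD₁₂_eq_zero]
  change twistedD₁₂ ε (QuotientAddGroup.mk' _ ∘ averageCochain f) = 0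
  rw [← comp_twistedD₁₂, twistedD₁₂_averageCochain hf]
  ext p
  exact (AddCircle.coe_eq_zero_iff 1).mpr ⟨f p, by simp⟩

lemma cubeSum_eq_three_mul_averageCochain (hf : IsTwistedCocycle₂ ε f) {c : G}
    (hc : c ^ 3 = 1) (hεc : ε c = 1) : ((cubeSum c f : ℤ) : ℚ) = 3 * averageCochain f c := by
  have h := cubeSum_twistedD₁₂ hc hεc (averageCochain f)
  rw [twistedD₁₂_averageCochain hf] at h
  simpa [cubeSum] using h

lemma exists_twistedD₁₂_eq_of_averageCochain (hf : IsTwistedCocycle₂ ε f)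
    (h : ∀ a, ε a = 1 → (averageCochain f a : AddCircle (1 : ℚ)) = 0) :
    ∃ χ : G → ℤ, twistedD₁₂ ε χ = f := by
  obtain ⟨q, hq⟩ :
      ∃ q : ℚ, ∀ g, ε g = -1 → (averageCochain f g : AddCircle (1 : ℚ)) = q := by
    by_cases hτ : ∃ τ, ε τ = -1
    · obtain ⟨τ, hτ⟩ := hτ
      exact ⟨averageCochain f τ, fun g hg =>
        (isTwistedCocycle₁_averageCochain hf).eq_of_eq_neg_one h hg hτ⟩
    · exact ⟨0, fun g hg => (hτ ⟨g, hg⟩).elim⟩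
  -- `twistedD₀₁ ε (-q / 2)` is `0` on `ker ε` and `q` off it.
  set ψ := averageCochain f - twistedD₀₁ ε (-q / 2) with hψ
  have hint : ∀ g, ∃ m : ℤ, (m : ℚ) = ψ g := by
    intro g
    suffices (ψ g : AddCircle (1 : ℚ)) = 0 by
      simpa using (AddCircle.coe_eq_zero_iff 1).mp this
    rw [hψ, Pi.sub_apply, AddCircle.coe_sub]
    rcases Int.units_eq_one_or (ε g) with hg | hg
    · simp [twistedD₀₁, hg, h g hg]
    · have hD : twistedD₀₁ ε (-q / 2) g = q := by simp [twistedD₀₁, hg]; ring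
      rw [hD, hq g hg, sub_self]
  choose χ hχ using hint
  refine ⟨χ, funext fun p => Int.cast_injective (α := ℚ) ?_⟩
  have hcast := congrFun (comp_twistedD₁₂ (ε := ε) (Int.castAddHom ℚ) χ) p
  rwa [show Int.castAddHom ℚ ∘ χ = ψ from funext hχ, hψ, map_sub, twistedD₁₂_twistedD₀₁,
    sub_zero, twistedD₁₂_averageCochain hf] at hcast

end Averaging

section Perm

open Equiv Equiv.Perm

variable {α : Type*} [Fintype α] [DecidableEq α]

lemma Equiv.Perm.IsThreeCycle.pow_three_eq_one {c : Perm α} (hc : IsThreeCycle c) :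
    c ^ 3 = 1 := by
  rw [← hc.orderOf, pow_orderOf_eq_one]

namespace IsTwistedCocycle₁

variable {M : Type*} [AddCommGroup M] {χ : Perm α → M} (hχ : IsTwistedCocycle₁ sign χ)
include hχ

lemma map_isThreeCycle_eq_zero_of_five_le (h5 : 5 ≤ Nat.card α) {c : Perm α}
    (hc : IsThreeCycle c) : χ c = 0 := by
  obtain ⟨g, hg⟩ := isConj_iff.mp <| alternatingGroup.isThreeCycle_isConj h5
    (σ := ⟨c, hc.mem_alternatingGroup⟩) (τ := ⟨c⁻¹, hc.inv.mem_alternatingGroup⟩)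
    hc hc.inv
  have h2 : 2 • χ c = 0 := by
    have h := hχ.map_conj hc.sign g
    rw [show (g : Perm α) * c * (g : Perm α)⁻¹ = c⁻¹ from congrArg Subtype.val hg,
      hχ.map_inv, hc.sign, mem_alternatingGroup.mp g.2, one_smul] at h
    rw [two_nsmul]
    nth_rewrite 1 [← h]
    exact neg_add_cancel _
  have h3 : 3 • χ c = 0 := by rw [← hχ.map_pow hc.sign, hc.pow_three_eq_one, hχ.map_one]
  calc χ c = 3 • χ c - 2 • χ c := by abel
    _ = 0 := by rw [h2, h3, sub_zero]

lemma map_isThreeCycle_eq_zero {c : Perm α} (hc : IsThreeCycle c) (hχc : χ c = 0)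
    {σ : Perm α} (hσ : IsThreeCycle σ) : χ σ = 0 := by
  obtain ⟨g, rfl⟩ := isConj_iff.mp (isConj_iff_cycleType_eq.mpr (hc.trans hσ.symm))
  rw [hχ.map_conj hc.sign, hχc, smul_zero]

lemma eq_zero_of_sign_eq_one (h : ∀ σ, IsThreeCycle σ → χ σ = 0) {a : Perm α}
    (ha : sign a = 1) : χ a = 0 := by
  have hclosure := closure_three_cycles_eq_alternating (α := α)
  have hsign : ∀ x ∈ Subgroup.closure {σ : Perm α | IsThreeCycle σ}, sign x = 1 :=
    fun x hx => mem_alternatingGroup.mp (hclosure ▸ hx)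
  have ha' : a ∈ Subgroup.closure {σ : Perm α | IsThreeCycle σ} :=
    hclosure ▸ mem_alternatingGroup.mpr ha
  clear ha
  induction ha' using Subgroup.closure_induction with
  | mem σ hσ => exact h σ hσ
  | one => exact hχ.map_one
  | mul x y hx _ ihx ihy => rw [hχ.map_mul_of_eq_one (hsign x hx), ihx, ihy, add_zero]
  | inv x hx ihx => rw [hχ.map_inv, ihx, smul_zero, neg_zero]

end IsTwistedCocycle₁

variable {f : Perm α × Perm α → ℤ}

lemma exists_twistedD₁₂_eq_of_isThreeCycle (hf : IsTwistedCocycle₂ sign f)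
    (h : ∀ σ : Perm α, IsThreeCycle σ → (averageCochain f σ : AddCircle (1 : ℚ)) = 0) :
    ∃ χ, twistedD₁₂ sign χ = f :=
  exists_twistedD₁₂_eq_of_averageCochain hf fun _ ha =>
    (isTwistedCocycle₁_averageCochain hf).eq_zero_of_sign_eq_one h ha

lemma exists_twistedD₁₂_eq_of_card_ne (h3 : Nat.card α ≠ 3) (h4 : Nat.card α ≠ 4)
    (hf : IsTwistedCocycle₂ sign f) : ∃ χ, twistedD₁₂ sign χ = f := by
  refine exists_twistedD₁₂_eq_of_isThreeCycle hf fun σ hσ => ?_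
  have : 3 ≤ Nat.card α := by
    rw [← hσ.card_support, Nat.card_eq_fintype_card]
    exact Finset.card_le_univ _
  exact (isTwistedCocycle₁_averageCochain hf).map_isThreeCycle_eq_zero_of_five_le (by omega) hσ

lemma exists_twistedD₁₂_eq_iff_three_dvd_cubeSum (hf : IsTwistedCocycle₂ sign f)
    {c : Perm α} (hc : IsThreeCycle c) :
    (∃ χ, twistedD₁₂ sign χ = f) ↔ 3 ∣ cubeSum c f := by
  constructor
  · rintro ⟨χ, rfl⟩
    rw [cubeSum_twistedD₁₂ hc.pow_three_eq_one hc.sign]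
    exact ⟨χ c, by simp⟩
  · rintro ⟨m, hm⟩
    have hψc : (averageCochain f c : AddCircle (1 : ℚ)) = 0 := by
      have h := cubeSum_eq_three_mul_averageCochain hf hc.pow_three_eq_one hc.sign
      rw [hm] at h
      exact (AddCircle.coe_eq_zero_iff 1).mpr ⟨m, by push_cast at h; simp; linarith⟩
    exact exists_twistedD₁₂_eq_of_isThreeCycle hf fun σ hσ =>
      (isTwistedCocycle₁_averageCochain hf).map_isThreeCycle_eq_zero hc hψc hσ

end Perm

section H2

open groupCohomology

universe u

variable {k G : Type u} [CommRing k] [Group G] {A : Rep k G}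

lemma subsingleton_H2_of_forall_mem_coboundaries₂
    (h : ∀ f : cocycles₂ A, ⇑f ∈ coboundaries₂ A) : Subsingleton (H2 A) :=
  ⟨fun x y => H2_induction_on x fun f => H2_induction_on y fun f' =>
    (H2π_eq_iff f f').mpr (h (f - f'))⟩

lemma nonempty_H2_addEquiv_of_surjective {M : Type*} [AddCommGroup M] (ν : cocycles₂ A →+ M)
    (hν : Function.Surjective ν) (hker : ∀ f, ν f = 0 ↔ ⇑f ∈ coboundaries₂ A) :
    Nonempty (H2 A ≃+ M) := by
  let π : cocycles₂ A →+ H2 A := (H2π A).hom.toAddMonoidHom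
  have hπ : Function.Surjective π := (ModuleCat.epi_iff_surjective (H2π A)).mp inferInstance
  have hker' : π.ker = ν.ker := by
    ext f
    exact (H2π_eq_zero_iff f).trans (hker f).symm
  exact ⟨(QuotientAddGroup.quotientKerEquivOfSurjective π hπ).symm.trans
    ((QuotientAddGroup.quotientAddEquivOfEq hker').trans
      (QuotientAddGroup.quotientKerEquivOfSurjective ν hν))⟩

end H2

open Equiv Equiv.Perm groupCohomology

section SignRep

variable {n : ℕ}

lemma signRep_apply (g : Perm (Fin n)) (x : ℤ) : signRep n g x = sign g • x := by
  simp [signRep, Units.smul_def]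

lemma mem_cocycles₂_signRep_iff (f : Perm (Fin n) × Perm (Fin n) → ℤ) :
    f ∈ cocycles₂ (Rep.of (signRep n)) ↔ IsTwistedCocycle₂ sign f := by
  rw [mem_cocycles₂_iff]
  simp only [signRep_apply]
  rfl

lemma mem_coboundaries₂_signRep_iff (f : Perm (Fin n) × Perm (Fin n) → ℤ) :
    f ∈ coboundaries₂ (Rep.of (signRep n)) ↔ ∃ χ, twistedD₁₂ sign χ = f := by
  refine exists_congr fun χ => Eq.congr_left ?_
  ext ⟨g, h⟩
  simp [d₁₂_hom_apply, twistedD₁₂_apply, signRep_apply]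

lemma subsingleton_H2_signRep (h3 : n ≠ 3) (h4 : n ≠ 4) :
    Subsingleton (H2 (Rep.of (signRep n))) :=
  subsingleton_H2_of_forall_mem_coboundaries₂ fun f =>
    (mem_coboundaries₂_signRep_iff _).mpr <| exists_twistedD₁₂_eq_of_card_ne (by simpa)
      (by simpa) ((mem_cocycles₂_signRep_iff _).mp f.2)

lemma nonempty_H2_signRep_addEquiv {c : Perm (Fin n)} (hc : IsThreeCycle c)
    {κ : Perm (Fin n) → ZMod 3} (hκ : IsTwistedCocycle₁ sign κ) (hκc : κ c ≠ 0) :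
    Nonempty (H2 (Rep.of (signRep n)) ≃+ ZMod 3) := by
  let ν : cocycles₂ (Rep.of (signRep n)) →+ ZMod 3 :=
    (Int.castAddHom (ZMod 3)).comp ((cubeSum c).comp (cocycles₂ _).subtype.toAddMonoidHom)
  refine nonempty_H2_addEquiv_of_surjective ν (fun y => ?_) fun f => ?_
  · obtain ⟨f, hf, hfc⟩ :=
      exists_isTwistedCocycle₂_cubeSum_eq hκ hc.pow_three_eq_one hc.sign
    refine ⟨((y / κ c).val : ℤ) • ⟨f, (mem_cocycles₂_signRep_iff f).mpr hf⟩, ?_⟩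
    rw [map_zsmul, zsmul_eq_mul, Int.cast_natCast, ZMod.natCast_zmod_val]
    exact (congrArg _ hfc).trans (div_mul_cancel₀ y hκc)
  · have hf := (mem_cocycles₂_signRep_iff _).mp f.2
    exact (ZMod.intCast_zmod_eq_zero_iff_dvd _ 3).trans <|
      (exists_twistedD₁₂_eq_iff_three_dvd_cubeSum hf hc).symm.trans
        (mem_coboundaries₂_signRep_iff _).symm

end SignRep

lemma isThreeCycle_swap_zero_one_mul_swap_zero_two (m : ℕ) :
    IsThreeCycle (swap 0 1 * swap 0 2 : Perm (Fin (m + 3))) := by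
  have h2 : 2 % (m + 3) = 2 := Nat.mod_eq_of_lt (by omega)
  exact isThreeCycle_swap_mul_swap_same (by simp) (by simp [Fin.ext_iff, h2])
    (by simp [Fin.ext_iff, h2])

-- `Perm (Fin 3)` acts on `ZMod 3 = Fin 3` by the affine maps `x ↦ sign g • x + g 0`.
def twistedCocycleFin3 : Perm (Fin 3) → ZMod 3 := fun g => g 0

-- Label the pair partition `{{a, b}, {c, d}}` of `Fin 4` by `a ^^^ b - 1 ∈ ZMod 3`; then
-- `Perm (Fin 4)` acts on the labels by affine maps `x ↦ sign g • x + b`. This is the label of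
-- the image of `{{0, 1}, {2, 3}}`.
def twistedCocycleFin4 : Perm (Fin 4) → ZMod 3 := fun g => ((g 0 : ℕ) ^^^ (g 1 : ℕ) : ℕ) - 1

lemma isTwistedCocycle₁_twistedCocycleFin3 : IsTwistedCocycle₁ sign twistedCocycleFin3 := by
  unfold IsTwistedCocycle₁
  decide

lemma isTwistedCocycle₁_twistedCocycleFin4 : IsTwistedCocycle₁ sign twistedCocycleFin4 := by
  unfold IsTwistedCocycle₁
  decide

theorem H2_signRep_general (n : ℕ) :
    (n = 3 ∨ n = 4 →
      Nonempty ((groupCohomology (Rep.of (signRep n)) 2) ≃+ ZMod 3)) ∧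
    (n ≠ 3 → n ≠ 4 → Subsingleton (groupCohomology (Rep.of (signRep n)) 2)) := by
  refine ⟨?_, subsingleton_H2_signRep⟩
  rintro (rfl | rfl)
  · exact nonempty_H2_signRep_addEquiv (isThreeCycle_swap_zero_one_mul_swap_zero_two 0)
      isTwistedCocycle₁_twistedCocycleFin3 (by decide)
  · exact nonempty_H2_signRep_addEquiv (isThreeCycle_swap_zero_one_mul_swap_zero_two 1)
      isTwistedCocycle₁_twistedCocycleFin4 (by decide)

/-- For `n ≥ 2`, `H^2(Σ_n, ℤ_sgn)` is trivial except when `n ∈ {3, 4}`, in which case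
it is cyclic of order `3`. -/
theorem H2_signRep (n : ℕ) (hn : 2 ≤ n) :
    (n = 3 ∨ n = 4 →
      Nonempty ((groupCohomology (Rep.of (signRep n)) 2) ≃+ ZMod 3)) ∧
    (n ≠ 3 → n ≠ 4 → Subsingleton (groupCohomology (Rep.of (signRep n)) 2)) :=
  H2_signRep_general n
end
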